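/- Define Λ(θ) = −∫_0^θ ln|2 sin t| dt and V(α, β) = Λ(α) + Λ(β) + Λ(π − α − β) on D = {(α, β) : α > 0, β > 0, α + β < π}. Then V attains its maximum on D at the unique point (α, β) = (π/3, π/3), i.e., the regular ideal tetrahedron maximizes volume among all ideal hyperbolic tetrahedra. -/

import Mathlib

/-!
For a fixed sum `s < π`, the map `θ ↦ Λ θ + Λ (s - θ)` has derivative
`log |2 sin (s - θ)| - log |2 sin θ|`, which is positive before `s / 2` and negative after it, so
replacing `(α, β)` by `(m, m)` with `m = (α + β) / 2` strictly increases the volume unless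
`α = β`. On the diagonal, `t ↦ 2 Λ t + Λ (π - 2 t)` has derivative
`2 (log |2 sin (π - 2 t)| - log |2 sin t|)`, which changes sign from `+` to `-` at `π / 3`. Both
sign conditions come down to `sin x < sin y` for `0 < x < y` with `x + y < π`, read off from
`sin y - sin x = 2 sin ((y - x) / 2) cos ((y + x) / 2)`.
-/

open Real MeasureTheory Set

noncomputable def lobachevsky (θ : ℝ) : ℝ := -∫ t in (0 : ℝ)..θ, Real.log |2 * Real.sin t|

noncomputable def idealVol (p : ℝ × ℝ) : ℝ :=
  lobachevsky p.1 + lobachevsky p.2 + lobachevsky (π - p.1 - p.2)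

def angleTriangle : Set (ℝ × ℝ) := {p | 0 < p.1 ∧ 0 < p.2 ∧ p.1 + p.2 < π}

lemma apply_lt_of_hasDerivAt_pos_of_neg {f f' : ℝ → ℝ} {a b c x : ℝ}
    (hf : ∀ y ∈ Ioo a c, HasDerivAt f (f' y) y)
    (hpos : ∀ y ∈ Ioo a b, 0 < f' y) (hneg : ∀ y ∈ Ioo b c, f' y < 0)
    (hb : b ∈ Ioo a c) (hx : x ∈ Ioo a c) (hxb : x ≠ b) : f x < f b := by
  have hcont : ∀ {u v}, a < u → v < c → ContinuousOn f (Icc u v) := fun hu hv y hy =>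
    (hf y ⟨hu.trans_le hy.1, hy.2.trans_lt hv⟩).continuousAt.continuousWithinAt
  rcases hxb.lt_or_gt with hlt | hgt
  · have hmono : StrictMonoOn f (Icc x b) := by
      refine strictMonoOn_of_hasDerivWithinAt_pos (f' := f') (convex_Icc x b) (hcont hx.1 hb.2)
        (fun y hy => ?_) (fun y hy => ?_) <;> simp only [interior_Icc] at hy ⊢
      · exact (hf y ⟨hx.1.trans hy.1, hy.2.trans hb.2⟩).hasDerivWithinAt
      · exact hpos y ⟨hx.1.trans hy.1, hy.2⟩
    exact hmono ⟨le_rfl, hlt.le⟩ ⟨hlt.le, le_rfl⟩ hlt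
  · have hanti : StrictAntiOn f (Icc b x) := by
      refine strictAntiOn_of_hasDerivWithinAt_neg (f' := f') (convex_Icc b x) (hcont hb.1 hx.2)
        (fun y hy => ?_) (fun y hy => ?_) <;> simp only [interior_Icc] at hy ⊢
      · exact (hf y ⟨hb.1.trans hy.1, hy.2.trans hx.2⟩).hasDerivWithinAt
      · exact hneg y ⟨hy.1, hy.2.trans hx.2⟩
    exact hanti ⟨le_rfl, hgt.le⟩ ⟨hgt.le, le_rfl⟩ hgt

lemma log_abs_two_mul_sin_lt {x y : ℝ} (hx : 0 < x) (hxy : x < y) (hsum : x + y < π) :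
    log |2 * sin x| < log |2 * sin y| := by
  have hsinx : 0 < sin x := sin_pos_of_pos_of_lt_pi hx (by linarith)
  have hsin : sin x < sin y := by
    rw [← sub_pos, sin_sub_sin]
    have := sin_pos_of_pos_of_lt_pi (x := (y - x) / 2) (by linarith) (by linarith)
    have := cos_pos_of_mem_Ioo (x := (y + x) / 2) ⟨by linarith, by linarith⟩
    positivity
  rw [abs_of_pos (by linarith), abs_of_pos (by linarith)]
  exact log_lt_log (by linarith) (by linarith)

lemma intervalIntegrable_log_abs_two_mul_sin (a b : ℝ) :
    IntervalIntegrable (fun t => log |2 * sin t|) volume a b := by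
  have : MeromorphicOn (fun t => 2 * sin t) (uIcc a b) :=
    (analyticOnNhd_const.mul analyticOnNhd_sin).meromorphicOn
  simpa only [Real.norm_eq_abs] using this.intervalIntegrable_log_norm

lemma hasDerivAt_lobachevsky {x : ℝ} (hx : sin x ≠ 0) :
    HasDerivAt lobachevsky (-log |2 * sin x|) x := by
  have hcont : Continuous fun t => |2 * sin t| := by fun_prop
  refine (intervalIntegral.integral_hasDerivAt_right (intervalIntegrable_log_abs_two_mul_sin 0 x)
    (measurable_log.comp hcont.measurable).stronglyMeasurable.stronglyMeasurableAtFilter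
    ((continuousAt_log ?_).comp hcont.continuousAt)).neg
  simpa using hx

lemma lobachevsky_add_lobachevsky_lt {a b : ℝ} (ha : 0 < a) (hb : 0 < b) (hab : a ≠ b)
    (hsum : a + b < π) : lobachevsky a + lobachevsky b < 2 * lobachevsky ((a + b) / 2) := by
  set s := a + b
  have hderiv : ∀ θ ∈ Ioo 0 s, HasDerivAt (fun θ => lobachevsky θ + lobachevsky (s - θ))
      (log |2 * sin (s - θ)| - log |2 * sin θ|) θ := by
    intro θ ⟨hθ₀, hθs⟩
    have h₁ := hasDerivAt_lobachevsky (sin_pos_of_mem_Ioo ⟨hθ₀, by linarith⟩).ne'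
    have h₂ := (hasDerivAt_lobachevsky (sin_pos_of_mem_Ioo
      ⟨sub_pos.2 hθs, by linarith⟩).ne').comp θ ((hasDerivAt_id' θ).const_sub s)
    exact (h₁.add h₂).congr_deriv (by ring)
  have key := apply_lt_of_hasDerivAt_pos_of_neg (b := s / 2) (x := a) hderiv
    (fun θ ⟨hθ₀, hθ⟩ => sub_pos.2
      (log_abs_two_mul_sin_lt hθ₀ (by linarith) (by linarith)))
    (fun θ ⟨hθ, hθs⟩ => sub_neg.2
      (log_abs_two_mul_sin_lt (by linarith) (by linarith) (by linarith)))
    ⟨by positivity, by linarith⟩ ⟨ha, by linarith⟩ (fun h => hab (by linarith))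
  rwa [add_sub_cancel_left, show s - s / 2 = s / 2 by ring, ← two_mul] at key

lemma two_mul_lobachevsky_add_lobachevsky_lt {t : ℝ} (ht : t ∈ Ioo 0 (π / 2))
    (hne : t ≠ π / 3) :
    2 * lobachevsky t + lobachevsky (π - 2 * t) < 3 * lobachevsky (π / 3) := by
  have hπ := pi_pos
  have hderiv : ∀ θ ∈ Ioo 0 (π / 2),
      HasDerivAt (fun θ => 2 * lobachevsky θ + lobachevsky (π - 2 * θ))
        (2 * (log |2 * sin (π - 2 * θ)| - log |2 * sin θ|)) θ := by
    intro θ ⟨hθ₀, hθ⟩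
    have h₁ := hasDerivAt_lobachevsky (sin_pos_of_mem_Ioo ⟨hθ₀, by linarith⟩).ne'
    have h₂ := (hasDerivAt_lobachevsky (sin_pos_of_mem_Ioo
      ⟨by linarith, by linarith⟩).ne').comp θ (((hasDerivAt_id' θ).const_mul 2).const_sub π)
    exact ((h₁.const_mul 2).add h₂).congr_deriv (by ring)
  have key := apply_lt_of_hasDerivAt_pos_of_neg (b := π / 3) hderiv
    (fun θ ⟨hθ₀, hθ⟩ => mul_pos two_pos
      (sub_pos.2 (log_abs_two_mul_sin_lt hθ₀ (by linarith) (by linarith))))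
    (fun θ ⟨hθ, hθ'⟩ => mul_neg_of_pos_of_neg two_pos
      (sub_neg.2 (log_abs_two_mul_sin_lt (by linarith) (by linarith) (by linarith))))
    ⟨by positivity, by linarith⟩ ht hne
  rw [show π - 2 * (π / 3) = π / 3 by ring] at key
  linarith

lemma two_mul_lobachevsky_add_lobachevsky_le {t : ℝ} (ht : t ∈ Ioo 0 (π / 2)) :
    2 * lobachevsky t + lobachevsky (π - 2 * t) ≤ 3 * lobachevsky (π / 3) := by
  rcases eq_or_ne t (π / 3) with rfl | hne
  · rw [show π - 2 * (π / 3) = π / 3 by ring]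
    linarith
  · exact (two_mul_lobachevsky_add_lobachevsky_lt ht hne).le

theorem stmt_19 :
    (π / 3, π / 3) ∈ angleTriangle ∧
    ∀ p ∈ angleTriangle, p ≠ (π / 3, π / 3) → idealVol p < idealVol (π / 3, π / 3) := by
  have hπ := pi_pos
  refine ⟨⟨by positivity, by positivity, by linarith⟩, ?_⟩
  rintro ⟨α, β⟩ ⟨hα : 0 < α, hβ : 0 < β, hsum : α + β < π⟩ hne
  have hmax : idealVol (π / 3, π / 3) = 3 * lobachevsky (π / 3) := by
    rw [idealVol, show π - π / 3 - π / 3 = π / 3 by ring]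
    ring
  rw [hmax, idealVol, show π - α - β = π - 2 * ((α + β) / 2) by ring]
  rcases eq_or_ne α β with rfl | hαβ
  · rw [add_self_div_two]
    have := two_mul_lobachevsky_add_lobachevsky_lt ⟨hα, by linarith⟩ fun h => hne (by rw [h])
    linarith
  · linarith [lobachevsky_add_lobachevsky_lt hα hβ hαβ hsum,
      two_mul_lobachevsky_add_lobachevsky_le (t := (α + β) / 2) ⟨by positivity, by linarith⟩]
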